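/- arXiv:2502.17236 — 2 statements merged into one kernel-verified Lean document; each statement's English description precedes it below -/
import Mathlib

section
/- Let $a_1,\dots,a_m \in \mathbb{Z}^2$ be a balanced tuple, i.e. $\sum_{i=1}^{m} a_i = 0$, and let $(b_1,\dots,b_m) = (a_2, a_3, \dots, a_m, a_1)$ be its cyclic rotation. Then $\sum_{2 \leq i < j \leq m} a_i \wedge a_j = \sum_{2 \leq i < j \leq m} b_i \wedge b_j$. Consequently, for a cyclic permutation $\omega$ the quantity $k(\omega) = \sum_{2 \leq i < j \leq m} a_{\tilde\omega(i)} \wedge a_{\tilde\omega(j)}$ does not depend on the choice of ordered representative $\tilde\omega$ of the cyclic orbit $\omega$, i.e. $k(\omega)$ is well defined. -/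
/-- `r ∧ r' = r₁ r₂' - r₂ r₁'`. -/
def wedge (r r' : ℤ × ℤ) : ℤ := r.1 * r'.2 - r.2 * r'.1

/-- The quantity `k = ∑_{2 ≤ i < j ≤ m} aᵢ ∧ aⱼ` attached to a tuple
`a : Fin m → ℤ²` (0-based indices: pairs with `0 < i < j`). -/
def kSum (m : ℕ) (a : Fin m → ℤ × ℤ) : ℤ :=
  ∑ i : Fin m, ∑ j : Fin m, if i < j ∧ 0 < (i : ℕ) then wedge (a i) (a j) else 0

/-!
Call `∑_{i < j} aᵢ ∧ aⱼ`, over all pairs, the pair sum of `a`. By bilinearity, splitting the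
first entry off a balanced tuple changes the pair sum by `a₁ ∧ (-a₁) = 0`, so `k(a)` is the pair
sum of `a` itself. Rotating moves `a₁` from the front to the back, and splitting it off at the back
changes the pair sum by `(-a₁) ∧ a₁ = 0`; hence the rotation has the same pair sum.
-/

lemma wedge_sum_right {ι : Type*} (s : Finset ι) (x : ℤ × ℤ) (f : ι → ℤ × ℤ) :
    wedge x (∑ i ∈ s, f i) = ∑ i ∈ s, wedge x (f i) := by
  simp only [wedge, Prod.fst_sum, Prod.snd_sum, Finset.mul_sum, Finset.sum_sub_distrib]

lemma wedge_sum_left {ι : Type*} (s : Finset ι) (x : ℤ × ℤ) (f : ι → ℤ × ℤ) :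
    wedge (∑ i ∈ s, f i) x = ∑ i ∈ s, wedge (f i) x := by
  simp only [wedge, Prod.fst_sum, Prod.snd_sum, Finset.sum_mul, Finset.sum_sub_distrib]

lemma wedge_neg_right_self (x : ℤ × ℤ) : wedge x (-x) = 0 := by
  simp only [wedge, Prod.fst_neg, Prod.snd_neg]; ring

lemma wedge_neg_left_self (x : ℤ × ℤ) : wedge (-x) x = 0 := by
  simp only [wedge, Prod.fst_neg, Prod.snd_neg]; ring

def pairWedgeSum {n : ℕ} (a : Fin n → ℤ × ℤ) : ℤ :=
  ∑ i, ∑ j, if i < j then wedge (a i) (a j) else 0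

lemma pairWedgeSum_succ {n : ℕ} (a : Fin (n + 1) → ℤ × ℤ) :
    pairWedgeSum a = wedge (a 0) (∑ i : Fin n, a i.succ) + pairWedgeSum (fun i => a i.succ) := by
  simp only [pairWedgeSum, Fin.sum_univ_succ, if_false, Fin.succ_pos,
    if_true, Fin.not_lt_zero, Fin.succ_lt_succ_iff, zero_add, wedge_sum_right]

lemma pairWedgeSum_castSucc {n : ℕ} (a : Fin (n + 1) → ℤ × ℤ) :
    pairWedgeSum a = pairWedgeSum (fun i => a i.castSucc) +
      wedge (∑ i : Fin n, a i.castSucc) (a (Fin.last n)) := by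
  simp only [pairWedgeSum, Fin.sum_univ_castSucc, lt_self_iff_false, if_false,
    Fin.castSucc_lt_last, if_true, Fin.castSucc_lt_castSucc_iff, add_zero, wedge_sum_left,
    Finset.sum_add_distrib, (Fin.le_last _).not_gt, Finset.sum_const_zero]

lemma kSum_eq_pairWedgeSum_succ {n : ℕ} (a : Fin (n + 1) → ℤ × ℤ) :
    kSum (n + 1) a = pairWedgeSum (fun i => a i.succ) := by
  simp only [kSum, pairWedgeSum, Fin.sum_univ_succ, Fin.val_zero, lt_self_iff_false, and_false,
    if_false, Fin.not_lt_zero, false_and, Finset.sum_const_zero, zero_add,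
    Fin.succ_lt_succ_iff, Fin.val_succ, Nat.succ_pos, and_true]

lemma sum_succ_eq_neg_of_sum_eq_zero {M : Type*} [AddCommGroup M] {n : ℕ} {a : Fin (n + 1) → M}
    (ha : ∑ i, a i = 0) : ∑ i : Fin n, a i.succ = -a 0 := by
  rw [Fin.sum_univ_succ] at ha
  exact eq_neg_of_add_eq_zero_right ha

lemma sum_add_right_eq_zero {M : Type*} [AddCommMonoid M] {n : ℕ} {a : Fin (n + 1) → M}
    (ha : ∑ i, a i = 0) (c : Fin (n + 1)) : ∑ i, a (i + c) = 0 :=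
  (Equiv.sum_comp (Equiv.addRight c) a).trans ha

lemma kSum_eq_pairWedgeSum {n : ℕ} {a : Fin (n + 1) → ℤ × ℤ} (ha : ∑ i, a i = 0) :
    kSum (n + 1) a = pairWedgeSum a := by
  rw [kSum_eq_pairWedgeSum_succ, pairWedgeSum_succ, sum_succ_eq_neg_of_sum_eq_zero ha,
    wedge_neg_right_self, zero_add]

lemma pairWedgeSum_rotate_one {n : ℕ} {a : Fin (n + 1) → ℤ × ℤ} (ha : ∑ i, a i = 0) :
    pairWedgeSum (fun i => a (i + 1)) = pairWedgeSum a := by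
  have htail := sum_succ_eq_neg_of_sum_eq_zero ha
  rw [pairWedgeSum_castSucc, pairWedgeSum_succ a, htail, wedge_neg_right_self, zero_add]
  simp only [Fin.coeSucc_eq_succ, htail, Fin.last_add_one, wedge_neg_left_self, add_zero]

lemma kSum_rotate_one {n : ℕ} {a : Fin (n + 1) → ℤ × ℤ} (ha : ∑ i, a i = 0) :
    kSum (n + 1) (fun i => a (i + 1)) = kSum (n + 1) a := by
  rw [kSum_eq_pairWedgeSum (sum_add_right_eq_zero ha 1), kSum_eq_pairWedgeSum ha,
    pairWedgeSum_rotate_one ha]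

/-- Let `a₁, …, a_m ∈ ℤ²` be a balanced tuple (`∑ aᵢ = 0`) and let
`(b₁, …, b_m) = (a₂, a₃, …, a_m, a₁)` be its cyclic rotation.  Then
`∑_{2 ≤ i < j ≤ m} aᵢ ∧ aⱼ = ∑_{2 ≤ i < j ≤ m} bᵢ ∧ bⱼ`.  Consequently, for a
cyclic permutation `ω` the quantity `k(ω)` does not depend on the choice of ordered
representative of the cyclic orbit: every cyclic rotation of the tuple gives the same
value.  (We index by `Fin (m+1)`, so tuples are nonempty; `i + c` is cyclic
addition in `Fin (m+1)`.) -/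
theorem kSum_cyclic_invariant (m : ℕ) (a : Fin (m + 1) → ℤ × ℤ) (ha : ∑ i, a i = 0) :
    kSum (m + 1) a = kSum (m + 1) (fun i => a (i + 1)) ∧
    ∀ c : Fin (m + 1), kSum (m + 1) (fun i => a (i + c)) = kSum (m + 1) a := by
  refine ⟨(kSum_rotate_one ha).symm, fun c => ?_⟩
  induction c using Fin.induction with
  | zero => simp only [add_zero]
  | succ c ih =>
    calc kSum (m + 1) (fun i => a (i + c.succ))
        = kSum (m + 1) (fun i => a (i + 1 + c.castSucc)) := by
          simp only [← Fin.coeSucc_eq_succ, add_comm (c.castSucc : Fin (m + 1)), add_assoc]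
      _ = kSum (m + 1) a := by rw [kSum_rotate_one (sum_add_right_eq_zero ha c.castSucc), ih]
end

section
/- Fix positive integers $n$ and $N$. There is a unique $\mathbb{C}$-algebra homomorphism $\varphi : \mathbb{C}[t_1,\dots,t_n]/(t_1^{N+1},\dots,t_n^{N+1}) \longrightarrow \tilde R_N = \mathbb{C}[u_{ij} : 1 \leq i \leq n,\ 1 \leq j \leq N]/\langle u_{ij}^2 \rangle$ with $\varphi(t_i) = \sum_{j=1}^{N} u_{ij}$ for each $i$ (in particular $(\sum_{j=1}^N u_{ij})^{N+1} = 0$ in $\tilde R_N$, so $\varphi$ is well defined), and $\varphi$ is injective. -/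
open MvPolynomial

/-- The ideal `(t₁^{N+1}, …, t_n^{N+1})` of `ℂ[t₁, …, t_n]`. -/
noncomputable def tIdeal (n N : ℕ) : Ideal (MvPolynomial (Fin n) ℂ) :=
  Ideal.span (Set.range fun i : Fin n => (X i : MvPolynomial (Fin n) ℂ) ^ (N + 1))

/-- The ideal `⟨u_{ij}² ⟩` of `ℂ[u_{ij} : 1 ≤ i ≤ n, 1 ≤ j ≤ N]`. -/
noncomputable def uIdeal (n N : ℕ) : Ideal (MvPolynomial (Fin n × Fin N) ℂ) :=
  Ideal.span (Set.range fun p : Fin n × Fin N => (X p : MvPolynomial (Fin n × Fin N) ℂ) ^ 2)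

/-- `R_N = ℂ[t₁,…,t_n]/(t₁^{N+1},…,t_n^{N+1})`. -/
abbrev RN (n N : ℕ) : Type := MvPolynomial (Fin n) ℂ ⧸ tIdeal n N

/-- `R̃_N = ℂ[u_{ij}]/⟨u_{ij}²⟩`. -/
abbrev RtildeN (n N : ℕ) : Type := MvPolynomial (Fin n × Fin N) ℂ ⧸ uIdeal n N

/-- The class of `tᵢ` in `R_N`. -/
noncomputable def tcl (n N : ℕ) (i : Fin n) : RN n N :=
  Ideal.Quotient.mk (tIdeal n N) (X i)

/-- The class of `u_{ij}` in `R̃_N`. -/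
noncomputable def ucl (n N : ℕ) (i : Fin n) (j : Fin N) : RtildeN n N :=
  Ideal.Quotient.mk (uIdeal n N) (X (i, j))

/-!
Write `Pᵢ = ∑ⱼ u_{ij}` and `w(d)` for the vector of row sums of an exponent `d` of the `u_{ij}`.
For a squarefree exponent `d`, the coefficient of `u^d` in `∏ᵢ Pᵢ^{cᵢ}` is `∏ᵢ cᵢ!` if `w(d) = c`
and `0` otherwise: in each row the `cᵢ` factors `Pᵢ` may contribute the `cᵢ` variables of `d` in
any order. Squarefree monomials never occur in the monomial ideal `⟨u_{ij}²⟩`, so if `f(P)` lies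
in it, every exponent `b` of `f` with all `bᵢ ≤ N` (which is `w(d)` once `bᵢ` columns are chosen in
each row `i`) has coefficient `0`; that is, `f` lies in the monomial ideal `(tᵢ^{N+1})`.
-/

section MonomialIdeal
variable {σ R : Type*} [CommSemiring R]

theorem MvPolynomial.mem_span_X_pow_iff {k : ℕ} {q : MvPolynomial σ R} :
    q ∈ Ideal.span (Set.range fun p : σ => (X p : MvPolynomial σ R) ^ k) ↔
      ∀ d ∈ q.support, ∃ p, k ≤ d p := by
  have : (Set.range fun p : σ => (X p : MvPolynomial σ R) ^ k) =
      (fun d => monomial d (1 : R)) '' Set.range fun p => Finsupp.single p k := by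
    simp only [← Set.range_comp, Function.comp_def, X_pow_eq_monomial]
  simp [this, mem_ideal_span_monomial_image, Finsupp.single_le_iff]

theorem MvPolynomial.coeff_eq_zero_of_mem_span_X_sq {q : MvPolynomial σ R}
    (hq : q ∈ Ideal.span (Set.range fun p : σ => (X p : MvPolynomial σ R) ^ 2))
    {d : σ →₀ ℕ} (hd : ∀ p, d p ≤ 1) : coeff d q = 0 := by
  by_contra h
  obtain ⟨p, hp⟩ := mem_span_X_pow_iff.1 hq d (mem_support_iff.2 h)
  have := hd p
  omega

end MonomialIdeal

theorem Finsupp.mapDomain_fst_apply {α β M : Type*} [Fintype β] [AddCommMonoid M]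
    (d : α × β →₀ M) (a : α) : d.mapDomain Prod.fst a = ∑ b, d (a, b) := by
  classical
  rw [mapDomain, Finsupp.sum_apply, Finsupp.sum]
  simp only [single_apply]
  rw [← Finset.sum_filter]
  refine Eq.trans ?_ (Finset.sum_map Finset.univ (Function.Embedding.sectR a β) d)
  refine Finset.sum_subset (fun p hp => ?_) (fun p hp hpd => ?_)
  · simp only [Finset.mem_filter, Finsupp.mem_support_iff] at hp
    simp [← hp.2]
  · obtain ⟨b, -, rfl⟩ := Finset.mem_map.1 hp
    simpa using hpd

theorem Finsupp.prod_factorial_eq_mul_tsub_single {ι : Type*} [Fintype ι] [DecidableEq ι]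
    (w : ι →₀ ℕ) {i : ι} (hi : w i ≠ 0) :
    ∏ k, (w k).factorial = w i * ∏ k, ((w - single i 1 : ι →₀ ℕ) k).factorial := by
  rw [← Finset.mul_prod_erase _ _ (Finset.mem_univ i),
    ← Finset.mul_prod_erase _ _ (Finset.mem_univ i), ← mul_assoc, tsub_apply, single_eq_same,
    Nat.mul_factorial_pred hi]
  congr 1
  refine Finset.prod_congr rfl fun k hk => ?_
  rw [tsub_apply, single_eq_of_ne (Finset.ne_of_mem_erase hk), tsub_zero]

theorem Finsupp.mapDomain_tsub_single_one {α β : Type*} (f : α → β) {d : α →₀ ℕ} {a : α}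
    (ha : d a ≠ 0) : (d - single a 1).mapDomain f = d.mapDomain f - single (f a) 1 := by
  refine eq_tsub_of_add_eq ?_
  rw [← mapDomain_single, ← mapDomain_add,
    tsub_add_cancel_of_le (single_le_iff.2 (Nat.one_le_iff_ne_zero.2 ha))]

theorem Finsupp.exists_le_one_mapDomain_fst_eq {ι κ : Type*} [Finite ι] [Fintype κ] (b : ι →₀ ℕ)
    (hb : ∀ i, b i ≤ Fintype.card κ) :
    ∃ d : ι × κ →₀ ℕ, (∀ p, d p ≤ 1) ∧ d.mapDomain Prod.fst = b := by
  classical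
  choose S hS using fun i => Finset.exists_subset_card_eq (s := Finset.univ) (by simpa using hb i)
  refine ⟨equivFunOnFinite.symm fun p => if p.2 ∈ S p.1 then 1 else 0, fun p => ?_, ?_⟩
  · rw [coe_equivFunOnFinite_symm]
    split <;> simp
  · ext i
    simp [mapDomain_fst_apply, (hS i).2]

section RowSums
variable {ι κ R : Type*} [CommSemiring R] [Fintype κ]

noncomputable def rowSum (i : ι) : MvPolynomial (ι × κ) R := ∑ j, X (i, j)

theorem coeff_mul_rowSum {d : ι × κ →₀ ℕ} (hd : ∀ p, d p ≤ 1) (q : MvPolynomial (ι × κ) R)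
    (i : ι) : coeff d (q * rowSum i) = ∑ j, (d (i, j) : R) * coeff (d - .single (i, j) 1) q := by
  classical
  rw [rowSum, Finset.mul_sum, coeff_sum]
  refine Finset.sum_congr rfl fun j _ => ?_
  simp only [coeff_mul_X', Finsupp.mem_support_iff]
  rcases Nat.le_one_iff_eq_zero_or_eq_one.1 (hd (i, j)) with h | h <;> simp [h]

theorem coeff_aeval_rowSum [Fintype ι] (f : MvPolynomial ι R) {d : ι × κ →₀ ℕ}
    (hd : ∀ p, d p ≤ 1) :
    coeff d (aeval rowSum f) =
      coeff (d.mapDomain Prod.fst) f * ∏ i, (d.mapDomain Prod.fst i).factorial := by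
  classical
  induction f using MvPolynomial.induction_on generalizing d with
  | C a =>
    rw [aeval_C, algebraMap_eq, coeff_C, coeff_C]
    obtain rfl | hd0 := eq_or_ne d 0
    · simp
    · have hw0 : d.mapDomain Prod.fst ≠ 0 :=
        (Finsupp.mapDomain_apply_eq_zero_iff_of_subsingletonAddUnits _ d).not.2 hd0
      simp [hd0.symm, hw0.symm]
  | add p q hp hq => simp only [map_add, coeff_add, hp hd, hq hd, add_mul]
  | mul_X p i hp =>
    set w := d.mapDomain Prod.fst with hw
    have hterm (j : κ) : (d (i, j) : R) * coeff (d - .single (i, j) 1) (aeval rowSum p) =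
        d (i, j) * (coeff (w - .single i 1) p * ∏ k, ((w - .single i 1 : ι →₀ ℕ) k).factorial) := by
      obtain hij | hij := eq_or_ne (d (i, j)) 0
      · simp [hij]
      · rw [hp fun q => tsub_le_self.trans (hd q), Finsupp.mapDomain_tsub_single_one _ hij]
    rw [map_mul, aeval_X, coeff_mul_rowSum hd, Finset.sum_congr rfl fun j _ => hterm j,
      ← Finset.sum_mul, ← Nat.cast_sum, ← Finsupp.mapDomain_fst_apply, ← hw, coeff_mul_X']
    obtain hi | hi := eq_or_ne (w i) 0
    · simp [hi]
    · rw [if_pos (Finsupp.mem_support_iff.2 hi), Finsupp.prod_factorial_eq_mul_tsub_single w hi]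
      push_cast
      ring

theorem rowSum_pow_mem_span_X_sq (i : ι) :
    (rowSum i : MvPolynomial (ι × κ) R) ^ (Fintype.card κ + 1) ∈
      Ideal.span (Set.range fun p : ι × κ => (X p : MvPolynomial (ι × κ) R) ^ 2) := by
  have h := Ideal.sum_pow_mem_span_pow Finset.univ
    (fun j => (X (i, j) : MvPolynomial (ι × κ) R)) 1
  rw [Finset.card_univ, mul_one] at h
  refine Ideal.span_mono ?_ h
  rintro _ ⟨j, -, rfl⟩
  exact ⟨(i, j), rfl⟩

theorem aeval_rowSum_mem_span_X_sq_iff [Fintype ι] [NoZeroDivisors R] [CharZero R]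
    (f : MvPolynomial ι R) :
    aeval rowSum f ∈ Ideal.span (Set.range fun p : ι × κ => (X p : MvPolynomial (ι × κ) R) ^ 2) ↔
      f ∈ Ideal.span (Set.range fun i : ι => (X i : MvPolynomial ι R) ^ (Fintype.card κ + 1)) := by
  constructor
  · intro h
    refine mem_span_X_pow_iff.2 fun b hb => ?_
    by_contra! hb_le
    obtain ⟨d, hd, rfl⟩ :=
      Finsupp.exists_le_one_mapDomain_fst_eq (κ := κ) b fun i => Nat.lt_succ_iff.1 (hb_le i)
    have hcoeff := coeff_aeval_rowSum f hd
    rw [coeff_eq_zero_of_mem_span_X_sq h hd, eq_comm, mul_eq_zero, Nat.cast_eq_zero] at hcoeff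
    exact hcoeff.elim (mem_support_iff.1 hb)
      (Finset.prod_ne_zero_iff.2 fun i _ => Nat.factorial_ne_zero _)
  · refine fun hf => Ideal.mem_comap.1 (Ideal.span_le.2 (Set.range_subset_iff.2 fun i => ?_) hf)
    simpa using rowSum_pow_mem_span_X_sq i

end RowSums

theorem factoring_hom_exists_unique_injective_general (n N : ℕ) :
    (∀ i : Fin n, (∑ j : Fin N, ucl n N i j) ^ (N + 1) = 0) ∧
    (∃! φ : RN n N →ₐ[ℂ] RtildeN n N, ∀ i : Fin n, φ (tcl n N i) = ∑ j : Fin N, ucl n N i j) ∧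
    (∀ φ : RN n N →ₐ[ℂ] RtildeN n N,
      (∀ i : Fin n, φ (tcl n N i) = ∑ j : Fin N, ucl n N i j) → Function.Injective φ) := by
  have hker (f : MvPolynomial (Fin n) ℂ) : aeval rowSum f ∈ uIdeal n N ↔ f ∈ tIdeal n N := by
    simpa only [uIdeal, tIdeal, Fintype.card_fin] using
      aeval_rowSum_mem_span_X_sq_iff (κ := Fin N) f
  have hle : tIdeal n N ≤ (uIdeal n N).comap (aeval rowSum) := fun f hf => (hker f).2 hf
  let φ₀ : RN n N →ₐ[ℂ] RtildeN n N := Ideal.quotientMapₐ (uIdeal n N) (aeval rowSum) hle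
  have hφ₀ (i : Fin n) : φ₀ (tcl n N i) = ∑ j, ucl n N i j := by
    simp [φ₀, tcl, ucl, rowSum]
  have hunique (φ : RN n N →ₐ[ℂ] RtildeN n N) (hφ : ∀ i, φ (tcl n N i) = ∑ j, ucl n N i j) :
      φ = φ₀ :=
    Ideal.Quotient.algHom_ext _ (algHom_ext fun i => (hφ i).trans (hφ₀ i).symm)
  have hinj : Function.Injective φ₀ :=
    Ideal.quotientMap_injective' (H := hle) fun f hf => (hker f).1 hf
  refine ⟨fun i => ?_, ⟨φ₀, hφ₀, hunique⟩, fun φ hφ => hunique φ hφ ▸ hinj⟩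
  have htcl : tcl n N i ^ (N + 1) = 0 := by
    rw [tcl, ← map_pow, Ideal.Quotient.eq_zero_iff_mem]
    exact Ideal.subset_span (Set.mem_range_self i)
  rw [← hφ₀, ← map_pow, htcl, map_zero]

/-- Fix positive integers `n` and `N`.  In `R̃_N` one has `(∑_j u_{ij})^{N+1} = 0`;
there is a unique `ℂ`-algebra homomorphism
`φ : ℂ[t₁,…,t_n]/(tᵢ^{N+1}) → R̃_N` with `φ(tᵢ) = ∑_{j=1}^N u_{ij}` for each `i`
(so `φ` is well defined), and `φ` is injective. -/
theorem factoring_hom_exists_unique_injective (n N : ℕ) (hn : 0 < n) (hN : 0 < N) :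
    (∀ i : Fin n, (∑ j : Fin N, ucl n N i j) ^ (N + 1) = 0) ∧
    (∃! φ : RN n N →ₐ[ℂ] RtildeN n N, ∀ i : Fin n, φ (tcl n N i) = ∑ j : Fin N, ucl n N i j) ∧
    (∀ φ : RN n N →ₐ[ℂ] RtildeN n N,
      (∀ i : Fin n, φ (tcl n N i) = ∑ j : Fin N, ucl n N i j) → Function.Injective φ) :=
  factoring_hom_exists_unique_injective_general n N
end
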